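/- Consider units i = 1,…,N+1 and time periods t = 1,…,T with 1 ≤ T_0 < T, blank periods 𝓑 ⊆ {1,…,T_0} and training periods 𝓔 := {1,…,T_0} \ 𝓑. Suppose Y_{it} = μ_i'λ_t + θ_t'Z_i + 1[i = 1 and t > T_0]·τ_t + ε_{it}, where μ_i ∈ ℝ^r and Z_i ∈ ℝ^ℓ are deterministic, λ_t ∈ ℝ^r, θ_t ∈ ℝ^ℓ are random, and ε_t := (ε_{1t},…,ε_{N+1,t}) ∈ ℝ^{N+1}. Let ŵ = (ŵ_2,…,ŵ_{N+1}) be a random weight vector that is a measurable function of the training-period variables ((λ_s, θ_s, ε_s))_{s∈𝓔}, and define τ̂_t := Y_{1t} − Σ_{i=2}^{N+1} ŵ_i·Y_{it} for t ∈ 𝓑 ∪ {T_0+1,…,T}. Assume that, conditionally on ((λ_s, θ_s, ε_s))_{s∈𝓔}: (i) the family ((λ_t, θ_t))_{t ∈ 𝓑∪{T_0+1,…,T}} is exchangeable, (ii) the family (ε_t)_{t ∈ 𝓑∪{T_0+1,…,T}} is exchangeable, and (iii) the families in (i) and (ii) are independent of each other. If τ_t = 0 for all t > T_0, then (τ̂_t)_{t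 ∈ 𝓑∪{T_0+1,…,T}} is exchangeable. Moreover, the exchangeability assumption on (θ_t) can be dropped if additionally Z_1 = Σ_{i=2}^{N+1} ŵ_i·Z_i almost surely. -/
import Mathlib


open MeasureTheory ProbabilityTheory
open scoped ENNReal NNReal

/-- A finite family of random elements is exchangeable if its joint law is invariant under
every permutation of the index set. -/
def Exchangeable {Ω ι α : Type*} [mE : MeasurableSpace Ω] [MeasurableSpace α]
    (P : Measure Ω) (X : ι → Ω → α) : Prop :=
  ∀ π : Equiv.Perm ι,
    Measure.map (fun ω => fun i => X (π i) ω) P = Measure.map (fun ω => fun i => X i ω) P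

/-- A family `X` is exchangeable conditionally on the σ-algebra `𝔚` if, for every
permutation `π` and every measurable set of trajectories, the conditional probabilities
given `𝔚` of the permuted and unpermuted family lying in the set agree a.e. -/
def CondExchangeable {Ω ι α : Type*} [mE : MeasurableSpace Ω] [MeasurableSpace α]
    (P : Measure Ω) (𝔚 : MeasurableSpace Ω) (X : ι → Ω → α) : Prop :=
  ∀ π : Equiv.Perm ι, ∀ Bs : Set (ι → α), MeasurableSet Bs →
    P[Set.indicator {ω | (fun i => X (π i) ω) ∈ Bs} (fun _ => (1 : ℝ))|𝔚]
      =ᵐ[P] P[Set.indicator {ω | (fun i => X i ω) ∈ Bs} (fun _ => (1 : ℝ))|𝔚]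

/-- Two families `X` and `Z` are independent conditionally on the σ-algebra `𝔚` if the
conditional probability given `𝔚` of any joint trajectory event factorizes a.e. -/
def CondIndepFamilies {Ω ι κ α β : Type*} [mE : MeasurableSpace Ω] [MeasurableSpace α]
    [MeasurableSpace β] (P : Measure Ω) (𝔚 : MeasurableSpace Ω)
    (X : ι → Ω → α) (Z : κ → Ω → β) : Prop :=
  ∀ (B₁ : Set (ι → α)) (B₂ : Set (κ → β)), MeasurableSet B₁ → MeasurableSet B₂ →
    P[Set.indicator ({ω | (fun i => X i ω) ∈ B₁} ∩ {ω | (fun j => Z j ω) ∈ B₂})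
        (fun _ => (1 : ℝ))|𝔚]
      =ᵐ[P] (P[Set.indicator {ω | (fun i => X i ω) ∈ B₁} (fun _ => (1 : ℝ))|𝔚]
        * P[Set.indicator {ω | (fun j => Z j ω) ∈ B₂} (fun _ => (1 : ℝ))|𝔚])

lemma cond_rect {Ω ι α β : Type*} (𝔚 : MeasurableSpace Ω) {mΩ : MeasurableSpace Ω}
    (P : Measure Ω)
    [MeasurableSpace α] [MeasurableSpace β]
    {X : ι → Ω → α} {Zf : ι → Ω → β}
    (hXexch : CondExchangeable P 𝔚 X) (hZexch : CondExchangeable P 𝔚 Zf)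
    (hindep : CondIndepFamilies P 𝔚 X Zf) (π : Equiv.Perm ι)
    {B₁ : Set (ι → α)} {B₂ : Set (ι → β)} (hB₁ : MeasurableSet B₁) (hB₂ : MeasurableSet B₂) :
    P[Set.indicator ({ω | (fun i => X (π i) ω) ∈ B₁} ∩ {ω | (fun i => Zf (π i) ω) ∈ B₂})
        (fun _ => (1 : ℝ))|𝔚]
      =ᵐ[P] P[Set.indicator ({ω | (fun i => X i ω) ∈ B₁} ∩ {ω | (fun i => Zf i ω) ∈ B₂})
        (fun _ => (1 : ℝ))|𝔚] := by
  have hB₁' : MeasurableSet ((fun f : ι → α => fun i => f (π i)) ⁻¹' B₁) :=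
    (measurable_pi_lambda _ fun i => measurable_pi_apply (π i)) hB₁
  have hB₂' : MeasurableSet ((fun f : ι → β => fun i => f (π i)) ⁻¹' B₂) :=
    (measurable_pi_lambda _ fun i => measurable_pi_apply (π i)) hB₂
  exact (hindep _ _ hB₁' hB₂').trans
    (((hXexch π B₁ hB₁).mul (hZexch π B₂ hB₂)).trans (hindep B₁ B₂ hB₁ hB₂).symm)

lemma key_map {Ω ι α β γ : Type*} (𝔚 : MeasurableSpace Ω) {mΩ : MeasurableSpace Ω}
    (P : Measure Ω) [IsProbabilityMeasure P]
    [MeasurableSpace α] [MeasurableSpace β] [MeasurableSpace γ]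
    (hle : 𝔚 ≤ mΩ)
    {X : ι → Ω → α} {Zf : ι → Ω → β} (hX : ∀ i, Measurable (X i)) (hZ : ∀ i, Measurable (Zf i))
    {w : Ω → γ} (hw : Measurable[𝔚] w)
    (hXexch : CondExchangeable P 𝔚 X) (hZexch : CondExchangeable P 𝔚 Zf)
    (hindep : CondIndepFamilies P 𝔚 X Zf) (π : Equiv.Perm ι) :
    Measure.map (fun ω => (w ω, fun i => X (π i) ω, fun i => Zf (π i) ω)) P =
      Measure.map (fun ω => (w ω, fun i => X i ω, fun i => Zf i ω)) P := by
  classical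
  haveI : IsFiniteMeasure (P.trim hle) := isFiniteMeasure_trim hle
  haveI : SigmaFinite (P.trim hle) := inferInstance
  have hw' : Measurable w := hw.mono hle le_rfl
  have hΦπ : Measurable (fun ω => (w ω, fun i => X (π i) ω, fun i => Zf (π i) ω)) :=
    hw'.prodMk ((measurable_pi_lambda _ fun i => hX (π i)).prodMk
      (measurable_pi_lambda _ fun i => hZ (π i)))
  have hΦ : Measurable (fun ω => (w ω, fun i => X i ω, fun i => Zf i ω)) :=
    hw'.prodMk ((measurable_pi_lambda _ fun i => hX i).prodMk
      (measurable_pi_lambda _ fun i => hZ i))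
  haveI := Measure.isProbabilityMeasure_map (μ := P) hΦπ.aemeasurable
  haveI := Measure.isProbabilityMeasure_map (μ := P) hΦ.aemeasurable
  -- the main rectangle computation
  have main : ∀ (D : Set γ) (B₁ : Set (ι → α)) (B₂ : Set (ι → β)), MeasurableSet D →
      MeasurableSet B₁ → MeasurableSet B₂ →
      P ((w ⁻¹' D) ∩ ({ω | (fun i => X (π i) ω) ∈ B₁} ∩ {ω | (fun i => Zf (π i) ω) ∈ B₂}))
        = P ((w ⁻¹' D) ∩ ({ω | (fun i => X i ω) ∈ B₁} ∩ {ω | (fun i => Zf i ω) ∈ B₂})) := by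
    intro D B₁ B₂ hD hB₁ hB₂
    set Dset : Set Ω := w ⁻¹' D with hDdef
    have hDset𝔚 : MeasurableSet[𝔚] Dset := hw hD
    have hDsetΩ : MeasurableSet Dset := hle _ hDset𝔚
    set Sπ : Set Ω := {ω | (fun i => X (π i) ω) ∈ B₁} ∩ {ω | (fun i => Zf (π i) ω) ∈ B₂}
      with hSπdef
    set Sid : Set Ω := {ω | (fun i => X i ω) ∈ B₁} ∩ {ω | (fun i => Zf i ω) ∈ B₂} with hSiddef
    have hSπm : MeasurableSet Sπ :=
      ((measurable_pi_lambda _ fun i => hX (π i)) hB₁).inter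
        ((measurable_pi_lambda _ fun i => hZ (π i)) hB₂)
    have hSidm : MeasurableSet Sid :=
      ((measurable_pi_lambda _ fun i => hX i) hB₁).inter
        ((measurable_pi_lambda _ fun i => hZ i) hB₂)
    have hintπ : Integrable (Sπ.indicator fun _ => (1 : ℝ)) P :=
      (integrable_const (1 : ℝ)).indicator hSπm
    have hintid : Integrable (Sid.indicator fun _ => (1 : ℝ)) P :=
      (integrable_const (1 : ℝ)).indicator hSidm
    have hrect : P[Sπ.indicator fun _ => (1 : ℝ)|𝔚] =ᵐ[P] P[Sid.indicator fun _ => (1 : ℝ)|𝔚] :=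
      cond_rect 𝔚 P hXexch hZexch hindep π hB₁ hB₂
    have hcond : P[(Dset ∩ Sπ).indicator fun _ => (1 : ℝ)|𝔚]
        =ᵐ[P] P[(Dset ∩ Sid).indicator fun _ => (1 : ℝ)|𝔚] := by
      have h1 : (Dset ∩ Sπ).indicator (fun _ => (1 : ℝ))
          = Dset.indicator (Sπ.indicator fun _ => (1 : ℝ)) := (Set.indicator_indicator _ _ _).symm
      have h2 : (Dset ∩ Sid).indicator (fun _ => (1 : ℝ))
          = Dset.indicator (Sid.indicator fun _ => (1 : ℝ)) := (Set.indicator_indicator _ _ _).symm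
      rw [h1, h2]
      refine (condExp_indicator hintπ hDset𝔚).trans (Filter.EventuallyEq.trans ?_
        (condExp_indicator hintid hDset𝔚).symm)
      filter_upwards [hrect] with ω hω
      simp only [Set.indicator_apply]
      rw [hω]
    have hIeq : ∫ ω, (Dset ∩ Sπ).indicator (fun _ => (1 : ℝ)) ω ∂P
        = ∫ ω, (Dset ∩ Sid).indicator (fun _ => (1 : ℝ)) ω ∂P := by
      have h := integral_congr_ae hcond
      rwa [integral_condExp hle, integral_condExp hle] at h
    rw [integral_indicator_const (1 : ℝ) (hDsetΩ.inter hSπm),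
      integral_indicator_const (1 : ℝ) (hDsetΩ.inter hSidm)] at hIeq
    simp only [smul_eq_mul, mul_one] at hIeq
    exact (ENNReal.toReal_eq_toReal_iff' (measure_ne_top P _) (measure_ne_top P _)).mp hIeq
  -- measure extensionality on the π-system of rectangles
  refine ext_of_generate_finite
    (Set.image2 (· ×ˢ ·) {s : Set γ | MeasurableSet s}
      (Set.image2 (· ×ˢ ·) {s : Set (ι → α) | MeasurableSet s} {s : Set (ι → β) | MeasurableSet s}))
    ?_ ?_ ?_ ?_
  · refine (generateFrom_eq_prod MeasurableSpace.generateFrom_measurableSet generateFrom_prod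
      isCountablySpanning_measurableSet ?_).symm
    refine ⟨fun _ => Set.univ, fun _ => ?_, Set.iUnion_const _⟩
    rw [← Set.univ_prod_univ]
    exact Set.mem_image2_of_mem (by simp) (by simp)
  · exact MeasurableSpace.isPiSystem_measurableSet.prod (MeasurableSpace.isPiSystem_measurableSet.prod MeasurableSpace.isPiSystem_measurableSet)
  · rintro s ⟨D, hD, t, ⟨B₁, hB₁, B₂, hB₂, rfl⟩, rfl⟩
    simp only [Set.mem_setOf_eq] at hD hB₁ hB₂
    rw [Measure.map_apply hΦπ (hD.prod (hB₁.prod hB₂)),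
      Measure.map_apply hΦ (hD.prod (hB₁.prod hB₂))]
    have hpreπ : (fun ω => (w ω, fun i => X (π i) ω, fun i => Zf (π i) ω)) ⁻¹' (D ×ˢ B₁ ×ˢ B₂)
        = (w ⁻¹' D) ∩ ({ω | (fun i => X (π i) ω) ∈ B₁} ∩ {ω | (fun i => Zf (π i) ω) ∈ B₂}) := rfl
    have hpre : (fun ω => (w ω, fun i => X i ω, fun i => Zf i ω)) ⁻¹' (D ×ˢ B₁ ×ˢ B₂)
        = (w ⁻¹' D) ∩ ({ω | (fun i => X i ω) ∈ B₁} ∩ {ω | (fun i => Zf i ω) ∈ B₂}) := rfl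
    rw [hpreπ, hpre]
    exact main D B₁ B₂ hD hB₁ hB₂
  · simp

/-- In the interactive fixed effects model (unit `0` of `N+1` units treated;
times `Fin T`, 0-based, blank periods `B ⊆ {s < T0}`, training periods
`E = {s < T0} \ B`, post-treatment periods `{s : T0 ≤ s}`), with synthetic control weights
`w` measurable with respect to the σ-algebra `𝔚` generated by the training-period
variables, and estimates `τ̂_t = Y_{0t} − Σ_i w_i Y_{it}`: if the treatment effects vanish
after `T0` and, conditionally on `𝔚`, the pairs `(λ_t, θ_t)` over the blank and
post-treatment periods are exchangeable, the errors `ε_t` are exchangeable, and the two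
families are independent, then `(τ̂_t)` over these periods is exchangeable. Moreover, the
exchangeability of `θ` can be dropped (keeping that of `λ` alone) if additionally
`Z_1 = Σ_i w_i Z_i` almost surely. -/
theorem stmt_9
    {Ω : Type*} [mΩ : MeasurableSpace Ω] (P : Measure Ω) [IsProbabilityMeasure P]
    (N T T0 r l : ℕ) (hN : 1 ≤ N) (hT0 : 1 ≤ T0) (hT0T : T0 < T)
    (B : Finset (Fin T)) (hB : ∀ s ∈ B, (s : ℕ) < T0)
    (E : Finset (Fin T)) (hE : E = (Finset.univ.filter (fun s : Fin T => (s : ℕ) < T0)) \ B)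
    (hEne : E.Nonempty)
    (μ : Fin (N + 1) → Fin r → ℝ) (Z : Fin (N + 1) → Fin l → ℝ)
    (lam : Fin T → Ω → Fin r → ℝ) (hlam : ∀ s, Measurable (lam s))
    (θ : Fin T → Ω → Fin l → ℝ) (hθ : ∀ s, Measurable (θ s))
    (ε : Fin T → Ω → Fin (N + 1) → ℝ) (hε : ∀ s, Measurable (ε s))
    (τ : Fin T → ℝ) (hτ : ∀ s : Fin T, T0 ≤ (s : ℕ) → τ s = 0)
    (Y : Fin (N + 1) → Fin T → Ω → ℝ)
    (hY : ∀ i s ω, Y i s ω = (∑ k, μ i k * lam s ω k) + (∑ k, θ s ω k * Z i k)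
      + (if i = 0 ∧ T0 ≤ (s : ℕ) then τ s else 0) + ε s ω i)
    (𝔚 : MeasurableSpace Ω)
    (h𝔚 : 𝔚 = MeasurableSpace.comap
      (fun ω => fun s : {s : Fin T // s ∈ E} => (lam s.1 ω, θ s.1 ω, ε s.1 ω))
      inferInstance)
    (w : Ω → Fin N → ℝ) (hw : Measurable[𝔚] w)
    (tauhat : Fin T → Ω → ℝ)
    (htauhat : ∀ s ω, tauhat s ω = Y 0 s ω - ∑ i : Fin N, w ω i * Y i.succ s ω) :
    ((CondExchangeable (mE := mΩ) P 𝔚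
        (fun s : {s : Fin T // s ∈ B ∨ T0 ≤ (s : ℕ)} => fun ω => (lam s.1 ω, θ s.1 ω)) →
      CondExchangeable (mE := mΩ) P 𝔚
        (fun s : {s : Fin T // s ∈ B ∨ T0 ≤ (s : ℕ)} => fun ω => ε s.1 ω) →
      CondIndepFamilies (mE := mΩ) P 𝔚
        (fun s : {s : Fin T // s ∈ B ∨ T0 ≤ (s : ℕ)} => fun ω => (lam s.1 ω, θ s.1 ω))
        (fun s : {s : Fin T // s ∈ B ∨ T0 ≤ (s : ℕ)} => fun ω => ε s.1 ω) →
      Exchangeable (mE := mΩ) P (fun s : {s : Fin T // s ∈ B ∨ T0 ≤ (s : ℕ)} => tauhat s.1))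
    ∧
    (CondExchangeable (mE := mΩ) P 𝔚
        (fun s : {s : Fin T // s ∈ B ∨ T0 ≤ (s : ℕ)} => fun ω => lam s.1 ω) →
      CondExchangeable (mE := mΩ) P 𝔚
        (fun s : {s : Fin T // s ∈ B ∨ T0 ≤ (s : ℕ)} => fun ω => ε s.1 ω) →
      CondIndepFamilies (mE := mΩ) P 𝔚
        (fun s : {s : Fin T // s ∈ B ∨ T0 ≤ (s : ℕ)} => fun ω => lam s.1 ω)
        (fun s : {s : Fin T // s ∈ B ∨ T0 ≤ (s : ℕ)} => fun ω => ε s.1 ω) →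
      (∀ᵐ ω ∂P, ∀ k : Fin l, Z 0 k = ∑ i : Fin N, w ω i * Z i.succ k) →
      Exchangeable (mE := mΩ) P (fun s : {s : Fin T // s ∈ B ∨ T0 ≤ (s : ℕ)} => tauhat s.1))) := by
  classical
  letI : MeasurableSpace Ω := mΩ
  have hmeasE : Measurable[mΩ]
      (fun ω => fun s : {s : Fin T // s ∈ E} => (lam s.1 ω, θ s.1 ω, ε s.1 ω)) :=
    measurable_pi_lambda _ fun s => ((hlam s.1).prodMk ((hθ s.1).prodMk (hε s.1)))
  have h𝔚le : 𝔚 ≤ mΩ := by rw [h𝔚]; exact measurable_iff_comap_le.mp hmeasE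
  have hw' : Measurable[mΩ] w := hw.mono h𝔚le le_rfl
  have hif : ∀ (i : Fin (N + 1)) (t : Fin T),
      (if i = 0 ∧ T0 ≤ (t : ℕ) then τ t else 0) = 0 := by
    intro i t; split_ifs with hc
    · exact hτ t hc.2
    · rfl
  have htau : ∀ (t : Fin T) (ω : Ω), tauhat t ω
      = ((∑ k, μ 0 k * lam t ω k) + (∑ k, θ t ω k * Z 0 k) + ε t ω 0)
        - ∑ i : Fin N, w ω i * ((∑ k, μ i.succ k * lam t ω k)
            + (∑ k, θ t ω k * Z i.succ k) + ε t ω i.succ) := by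
    intro t ω
    rw [htauhat, hY, hif 0 t, add_zero]
    congr 1
    refine Finset.sum_congr rfl fun i _ => ?_
    rw [hY, hif, add_zero]
  constructor
  · -- Part 1
    intro hXexch hZexch hindep π
    have hmap := key_map 𝔚 (mΩ := mΩ) P h𝔚le
      (X := fun s : {s : Fin T // s ∈ B ∨ T0 ≤ (s : ℕ)} => fun ω => (lam s.1 ω, θ s.1 ω))
      (Zf := fun s : {s : Fin T // s ∈ B ∨ T0 ≤ (s : ℕ)} => fun ω => ε s.1 ω)
      (fun s => (hlam s.1).prodMk (hθ s.1)) (fun s => hε s.1) hw hXexch hZexch hindep π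
    set G : (Fin N → ℝ) × ({s : Fin T // s ∈ B ∨ T0 ≤ (s : ℕ)} → (Fin r → ℝ) × (Fin l → ℝ))
        × ({s : Fin T // s ∈ B ∨ T0 ≤ (s : ℕ)} → Fin (N + 1) → ℝ)
        → {s : Fin T // s ∈ B ∨ T0 ≤ (s : ℕ)} → ℝ :=
      fun p s => ((∑ k, μ 0 k * (p.2.1 s).1 k) + (∑ k, (p.2.1 s).2 k * Z 0 k) + p.2.2 s 0)
        - ∑ i : Fin N, p.1 i * ((∑ k, μ i.succ k * (p.2.1 s).1 k)
            + (∑ k, (p.2.1 s).2 k * Z i.succ k) + p.2.2 s i.succ) with hGdef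
    have hG : Measurable G := by
      rw [hGdef]
      fun_prop
    have hΦ : ∀ f : {s : Fin T // s ∈ B ∨ T0 ≤ (s : ℕ)} → {s : Fin T // s ∈ B ∨ T0 ≤ (s : ℕ)},
        Measurable[mΩ] (fun ω => (w ω, fun s => (lam (f s).1 ω, θ (f s).1 ω),
          fun s => ε (f s).1 ω)) := fun f =>
      hw'.prodMk ((measurable_pi_lambda _ fun s => (hlam _).prodMk (hθ _)).prodMk
        (measurable_pi_lambda _ fun s => hε _))
    have hfun : ∀ f : {s : Fin T // s ∈ B ∨ T0 ≤ (s : ℕ)} → {s : Fin T // s ∈ B ∨ T0 ≤ (s : ℕ)},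
        (fun ω => fun s => tauhat (f s).1 ω)
          = G ∘ (fun ω => (w ω, fun s => (lam (f s).1 ω, θ (f s).1 ω),
              fun s => ε (f s).1 ω)) := by
      intro f; funext ω; funext s
      simp only [Function.comp_apply, hGdef]
      exact htau (f s).1 ω
    exact (congrArg (fun g => Measure.map g P) (hfun fun s => π s)).trans
      (((Measure.map_map hG (hΦ fun s => π s)).symm.trans
        ((congrArg (Measure.map G) hmap).trans (Measure.map_map hG (hΦ id)))).trans
        (congrArg (fun g => Measure.map g P) (hfun id)).symm)
  · -- Part 2
    intro hXexch hZexch hindep hZbal π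
    have hmap := key_map 𝔚 (mΩ := mΩ) P h𝔚le
      (X := fun s : {s : Fin T // s ∈ B ∨ T0 ≤ (s : ℕ)} => fun ω => lam s.1 ω)
      (Zf := fun s : {s : Fin T // s ∈ B ∨ T0 ≤ (s : ℕ)} => fun ω => ε s.1 ω)
      (fun s => hlam s.1) (fun s => hε s.1) hw hXexch hZexch hindep π
    set G : (Fin N → ℝ) × ({s : Fin T // s ∈ B ∨ T0 ≤ (s : ℕ)} → (Fin r → ℝ))
        × ({s : Fin T // s ∈ B ∨ T0 ≤ (s : ℕ)} → Fin (N + 1) → ℝ)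
        → {s : Fin T // s ∈ B ∨ T0 ≤ (s : ℕ)} → ℝ :=
      fun p s => ((∑ k, μ 0 k * p.2.1 s k) + p.2.2 s 0)
        - ∑ i : Fin N, p.1 i * ((∑ k, μ i.succ k * p.2.1 s k) + p.2.2 s i.succ) with hGdef
    have hG : Measurable G := by
      rw [hGdef]
      fun_prop
    have hΦ : ∀ f : {s : Fin T // s ∈ B ∨ T0 ≤ (s : ℕ)} → {s : Fin T // s ∈ B ∨ T0 ≤ (s : ℕ)},
        Measurable[mΩ] (fun ω => (w ω, fun s => lam (f s).1 ω, fun s => ε (f s).1 ω)) := fun f =>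
      hw'.prodMk ((measurable_pi_lambda _ fun s => hlam _).prodMk
        (measurable_pi_lambda _ fun s => hε _))
    have hfun : ∀ f : {s : Fin T // s ∈ B ∨ T0 ≤ (s : ℕ)} → {s : Fin T // s ∈ B ∨ T0 ≤ (s : ℕ)},
        (fun ω => fun s => tauhat (f s).1 ω)
          =ᵐ[P] G ∘ (fun ω => (w ω, fun s => lam (f s).1 ω, fun s => ε (f s).1 ω)) := by
      intro f
      filter_upwards [hZbal] with ω hbal
      funext s
      have hb : ∑ i : Fin N, w ω i * (∑ k, θ (f s).1 ω k * Z i.succ k)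
          = ∑ k, θ (f s).1 ω k * Z 0 k := by
        calc ∑ i : Fin N, w ω i * ∑ k, θ (f s).1 ω k * Z i.succ k
            = ∑ i : Fin N, ∑ k, w ω i * (θ (f s).1 ω k * Z i.succ k) :=
              Finset.sum_congr rfl fun i _ => by rw [Finset.mul_sum]
          _ = ∑ k, ∑ i : Fin N, w ω i * (θ (f s).1 ω k * Z i.succ k) := Finset.sum_comm
          _ = ∑ k, θ (f s).1 ω k * ∑ i : Fin N, w ω i * Z i.succ k := by
              refine Finset.sum_congr rfl fun k _ => ?_
              rw [Finset.mul_sum]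
              exact Finset.sum_congr rfl fun i _ => by ring
          _ = ∑ k, θ (f s).1 ω k * Z 0 k :=
              Finset.sum_congr rfl fun k _ => by rw [← hbal k]
      simp only [Function.comp_apply, hGdef]
      rw [htau]
      have hsplit : ∑ i : Fin N, w ω i * ((∑ k, μ i.succ k * lam (f s).1 ω k)
            + (∑ k, θ (f s).1 ω k * Z i.succ k) + ε (f s).1 ω i.succ)
          = (∑ i : Fin N, w ω i * ((∑ k, μ i.succ k * lam (f s).1 ω k) + ε (f s).1 ω i.succ))
            + ∑ i : Fin N, w ω i * (∑ k, θ (f s).1 ω k * Z i.succ k) := by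
        rw [← Finset.sum_add_distrib]
        exact Finset.sum_congr rfl fun i _ => by ring
      rw [hsplit, hb]; ring
    exact (Measure.map_congr (hfun fun s => π s)).trans
      (((Measure.map_map hG (hΦ fun s => π s)).symm.trans
        ((congrArg (Measure.map G) hmap).trans (Measure.map_map hG (hΦ id)))).trans
        (Measure.map_congr (hfun id)).symm)
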